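/- Suppose the block updates of one iteration of the hybrid proximal block coordinate update method are performed, i.e., for each i, x_i^{k+1} minimizes over x_i the function ⟨∇_i f(x̂^{k,i}) − A_iᵀ(λ^k − β(Ax̂^{k,i} − b)), x_i⟩ + g_i(x_i) + (1/2)‖x_i − x_i^k‖_{P_i}², where x̂_j^{k,i} := x_j^{k+1} − w_{ij}(x_j^{k+1} − x_j^k) for all j, and λ^{k+1} := λ^k − ρ(Ax^{k+1} − b). Then for any x ∈ ℝ^n with Ax = b: Σ_{i,j} w_{ij}⟨H_i(x_i^{k+1} − x_i), H_j(x_j^{k+1} − x_j^k)⟩ + β Σ_{i,j} w_{ij}⟨A_i(x_i^{k+1} − x_i), A_j(x_j^{k+1} − x_j^k)⟩ ≥ (1/2)‖H(x^{k+1} − x)‖² + F(x^{k+1}) − F(x) − ⟨λ^{k+1}, Ax^{k+1} − b⟩ + (β − ρ)‖Ax^{k+1} − b‖² + (1/2)(‖x^{k+1} − x‖_P² − ‖x^k − x‖_P² + ‖x^{k+1} − x^k‖_P²). -/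

import Mathlib

open Matrix Finset Filter Topology

/-- For a block matrix `M = (M_1,…,M_m)` and a block vector `x = (x_1,…,x_m)`,
`blkMulVec M x = Σ_i M_i x_i` (i.e. `Mx` for the concatenated matrix/vector). -/
noncomputable def blkMulVec {m r : ℕ} {n : Fin m → ℕ}
    (M : ∀ i : Fin m, Matrix (Fin r) (Fin (n i)) ℝ)
    (x : ∀ i : Fin m, Fin (n i) → ℝ) : Fin r → ℝ :=
  ∑ i, M i *ᵥ x i

/-- The objective `F(x) = (1/2) xᵀQx + Σ_i g_i(x_i)` where `Q = HᵀH`,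
so `F(x) = (1/2)‖Hx‖² + Σ_i g_i(x_i)`. -/
noncomputable def Fobj {m q : ℕ} {n : Fin m → ℕ}
    (H : ∀ i : Fin m, Matrix (Fin q) (Fin (n i)) ℝ)
    (g : ∀ i : Fin m, (Fin (n i) → ℝ) → ℝ)
    (x : ∀ i : Fin m, Fin (n i) → ℝ) : ℝ :=
  (1 / 2) * (blkMulVec H x ⬝ᵥ blkMulVec H x) + ∑ i, g i (x i)

/-- `‖x‖_P²` for the block-diagonal matrix `P = blkdiag(P_1,…,P_m)`:
`‖x‖_P² = Σ_i x_iᵀ P_i x_i`. -/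
noncomputable def normPSq {m : ℕ} {n : Fin m → ℕ}
    (P : ∀ i : Fin m, Matrix (Fin (n i)) (Fin (n i)) ℝ)
    (x : ∀ i : Fin m, Fin (n i) → ℝ) : ℝ :=
  ∑ i, x i ⬝ᵥ (P i *ᵥ x i)

/-- `‖y‖_V²` for a block vector `y = (y_1,…,y_m)`, where `V = U ⊗ I` with
`U := W − euᵀ` (so `U_{ij} = W_{ij} − u_j`): `‖y‖_V² = Σ_{i,j} U_{ij} ⟨y_i, y_j⟩`. -/
noncomputable def normVSq {m r : ℕ} (W : Matrix (Fin m) (Fin m) ℝ) (u : Fin m → ℝ)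
    (y : Fin m → Fin r → ℝ) : ℝ :=
  ∑ i, ∑ j, (W i j - u j) * (y i ⬝ᵥ y j)

/-- The quadratic form `v ↦ vᵀ D_Bᵀ (M ⊗ I) D_B v = Σ_{i,j} M_{ij} ⟨B_i v_i, B_j v_j⟩`
for a block-diagonal matrix `D_B = blkdiag(B_1,…,B_m)` and `M ∈ ℝ^{m×m}`. -/
noncomputable def quadKron {m r : ℕ} {n : Fin m → ℕ} (M : Matrix (Fin m) (Fin m) ℝ)
    (B : ∀ i : Fin m, Matrix (Fin r) (Fin (n i)) ℝ)
    (v : ∀ i : Fin m, Fin (n i) → ℝ) : ℝ :=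
  ∑ i, ∑ j, M i j * ((B i *ᵥ v i) ⬝ᵥ (B j *ᵥ v j))

/-- The point `x̂^{k,i}` with blocks `x̂_j^{k,i} = x_j^{k+1} − w_{ij}(x_j^{k+1} − x_j^k)`. -/
noncomputable def xhat {m : ℕ} {n : Fin m → ℕ} (W : Matrix (Fin m) (Fin m) ℝ)
    (xk xk1 : ∀ i : Fin m, Fin (n i) → ℝ) (i : Fin m) :
    ∀ j : Fin m, Fin (n j) → ℝ :=
  fun j => xk1 j - W i j • (xk1 j - xk j)

/-- One iteration of the hybrid Jacobian/Gauss-Seidel proximal BCU method: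
for each `i`, `x_i^{k+1}` minimizes
`⟨∇_i f(x̂^{k,i}) − A_iᵀ(λ^k − β(Ax̂^{k,i} − b)), x_i⟩ + g_i(x_i) + (1/2)‖x_i − x_i^k‖_{P_i}²`
(where `f(x) = (1/2)‖Hx‖²`, so `∇_i f(x̂) = H_iᵀ(Hx̂)`), and
`λ^{k+1} = λ^k − ρ(Ax^{k+1} − b)`. -/
noncomputable def Iter {m q p : ℕ} {n : Fin m → ℕ}
    (H : ∀ i : Fin m, Matrix (Fin q) (Fin (n i)) ℝ)
    (A : ∀ i : Fin m, Matrix (Fin p) (Fin (n i)) ℝ)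
    (b : Fin p → ℝ)
    (g : ∀ i : Fin m, (Fin (n i) → ℝ) → ℝ)
    (P : ∀ i : Fin m, Matrix (Fin (n i)) (Fin (n i)) ℝ)
    (W : Matrix (Fin m) (Fin m) ℝ)
    (β ρ : ℝ)
    (xk xk1 : ∀ i : Fin m, Fin (n i) → ℝ)
    (lamk lamk1 : Fin p → ℝ) : Prop :=
  (∀ i : Fin m, ∀ ξ : Fin (n i) → ℝ,
      ((H i)ᵀ *ᵥ blkMulVec H (xhat W xk xk1 i)
          - (A i)ᵀ *ᵥ (lamk - β • (blkMulVec A (xhat W xk xk1 i) - b))) ⬝ᵥ xk1 i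
        + g i (xk1 i)
        + (1 / 2) * ((xk1 i - xk i) ⬝ᵥ (P i *ᵥ (xk1 i - xk i)))
      ≤ ((H i)ᵀ *ᵥ blkMulVec H (xhat W xk xk1 i)
          - (A i)ᵀ *ᵥ (lamk - β • (blkMulVec A (xhat W xk xk1 i) - b))) ⬝ᵥ ξ
        + g i ξ
        + (1 / 2) * ((ξ - xk i) ⬝ᵥ (P i *ᵥ (ξ - xk i))))
  ∧ lamk1 = lamk - ρ • (blkMulVec A xk1 - b)


/-!
Each block update is a proximal step for the convex function
`ξ ↦ ⟨∇_i L_β(x̂^{k,i}, λ^k), ξ⟩ + g_i(ξ)` with metric `P_i`, so the three-point property of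
proximal steps compares `x_i^{k+1}` with `x_i` and gains `½‖x_i^{k+1} − x_i‖²_{P_i}`. Summing
over the blocks, the gradients are taken at `x̂^{k,i} = x^{k+1} − (w_{ij}(x_j^{k+1} − x_j^k))_j`:
the corrections give the two `W`-weighted sums, and the remaining terms at `x^{k+1}` are turned
into `F` and the residual by polarizing `⟨Hx^{k+1}, H(x^{k+1} − x)⟩`, using `Ax = b`, and
writing `λ^k = λ^{k+1} + ρ(Ax^{k+1} − b)`.
-/

lemma le_of_forall_mem_Ioo_add_one_sub_mul_le {L c R : ℝ}
    (h : ∀ t ∈ Set.Ioo (0 : ℝ) 1, L + (1 - t) * c ≤ R) : L + c ≤ R := by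
  have hcont : Continuous fun t : ℝ => L + (1 - t) * c := by fun_prop
  have hlim : Tendsto (fun t : ℝ => L + (1 - t) * c) (𝓝[>] 0) (𝓝 (L + c)) := by
    simpa using (hcont.tendsto 0).mono_left nhdsWithin_le_nhds
  exact le_of_tendsto hlim (eventually_of_mem (Ioo_mem_nhdsGT one_pos) h)

section Prox

variable {ι : Type*} [Fintype ι]

lemma dotProduct_mulVec_lineMap (P : Matrix ι ι ℝ) (u v : ι → ℝ) (t : ℝ) :
    (u + t • (v - u)) ⬝ᵥ (P *ᵥ (u + t • (v - u)))
      = (1 - t) * (u ⬝ᵥ (P *ᵥ u)) + t * (v ⬝ᵥ (P *ᵥ v))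
        - t * (1 - t) * ((v - u) ⬝ᵥ (P *ᵥ (v - u))) := by
  obtain ⟨d, rfl⟩ : ∃ d, v = u + d := ⟨v - u, by abel⟩
  simp only [add_sub_cancel_left, mulVec_add, mulVec_smul, dotProduct_add, add_dotProduct,
    smul_dotProduct, dotProduct_smul, smul_eq_mul]
  ring

lemma prox_three_point {ψ : (ι → ℝ) → ℝ} (hψ : ConvexOn ℝ Set.univ ψ) (P : Matrix ι ι ℝ)
    {c a : ι → ℝ}
    (hmin : ∀ ξ, ψ a + (1 / 2) * ((a - c) ⬝ᵥ (P *ᵥ (a - c)))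
      ≤ ψ ξ + (1 / 2) * ((ξ - c) ⬝ᵥ (P *ᵥ (ξ - c))))
    (ξ : ι → ℝ) :
    ψ a + (1 / 2) * ((a - c) ⬝ᵥ (P *ᵥ (a - c))) + (1 / 2) * ((ξ - a) ⬝ᵥ (P *ᵥ (ξ - a)))
      ≤ ψ ξ + (1 / 2) * ((ξ - c) ⬝ᵥ (P *ᵥ (ξ - c))) := by
  -- compare `a` with the points `a + t (ξ - a)` and let `t → 0⁺`
  refine le_of_forall_mem_Ioo_add_one_sub_mul_le fun t ⟨ht0, ht1⟩ => ?_
  have hconv : ψ (a + t • (ξ - a)) ≤ (1 - t) * ψ a + t * ψ ξ := by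
    have hz : a + t • (ξ - a) = (1 - t) • a + t • ξ := by module
    rw [hz]
    exact hψ.2 (Set.mem_univ a) (Set.mem_univ ξ) (sub_nonneg.2 ht1.le) ht0.le (by ring)
  have hquad := dotProduct_mulVec_lineMap P (a - c) (ξ - c) t
  rw [sub_sub_sub_cancel_right, ← add_sub_right_comm] at hquad
  have hmin_t := hmin (a + t • (ξ - a))
  rw [hquad] at hmin_t
  refine le_of_mul_le_mul_left ?_ ht0
  linear_combination hmin_t + hconv

end Prox

section Blocks

variable {m r : ℕ} {n : Fin m → ℕ}

lemma blkMulVec_sub (M : ∀ i, Matrix (Fin r) (Fin (n i)) ℝ) (x y : ∀ i, Fin (n i) → ℝ) :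
    blkMulVec M (x - y) = blkMulVec M x - blkMulVec M y := by
  simp only [blkMulVec, Pi.sub_apply, mulVec_sub, sum_sub_distrib]

lemma blkMulVec_xhat (M : ∀ i, Matrix (Fin r) (Fin (n i)) ℝ) (W : Matrix (Fin m) (Fin m) ℝ)
    (xk xk1 : ∀ i, Fin (n i) → ℝ) (i : Fin m) :
    blkMulVec M (xhat W xk xk1 i)
      = blkMulVec M xk1 - ∑ j, W i j • (M j *ᵥ (xk1 j - xk j)) := by
  simp only [blkMulVec, xhat, mulVec_sub, mulVec_smul, sum_sub_distrib]

lemma transpose_mulVec_dotProduct {k l : Type*} [Fintype k] [Fintype l]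
    (M : Matrix k l ℝ) (y : k → ℝ) (v : l → ℝ) : (Mᵀ *ᵥ y) ⬝ᵥ v = y ⬝ᵥ (M *ᵥ v) := by
  rw [mulVec_transpose, dotProduct_mulVec]

lemma sum_transpose_mulVec_dotProduct (M : ∀ i, Matrix (Fin r) (Fin (n i)) ℝ) (y : Fin r → ℝ)
    (v : ∀ i, Fin (n i) → ℝ) : ∑ i, ((M i)ᵀ *ᵥ y) ⬝ᵥ v i = y ⬝ᵥ blkMulVec M v := by
  simp only [blkMulVec, dotProduct_sum, transpose_mulVec_dotProduct]

lemma sum_transpose_mulVec_xhat_dotProduct (M : ∀ i, Matrix (Fin r) (Fin (n i)) ℝ)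
    (W : Matrix (Fin m) (Fin m) ℝ) (xk xk1 v : ∀ i, Fin (n i) → ℝ) :
    ∑ i, ((M i)ᵀ *ᵥ blkMulVec M (xhat W xk xk1 i)) ⬝ᵥ v i
      = blkMulVec M xk1 ⬝ᵥ blkMulVec M v
        - ∑ i, ∑ j, W i j * ((M i *ᵥ v i) ⬝ᵥ (M j *ᵥ (xk1 j - xk j))) := by
  simp only [transpose_mulVec_dotProduct, blkMulVec_xhat, sub_dotProduct, sum_dotProduct,
    smul_dotProduct, smul_eq_mul, sum_sub_distrib, ← dotProduct_sum]
  simp only [blkMulVec, dotProduct_comm]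

/-- `∇_i L_β(y, λ)` for the augmented Lagrangian
`L_β(y, λ) = F(y) - ⟨λ, Ay - b⟩ + (β/2)‖Ay - b‖²`. -/
noncomputable def augLagGrad {q p : ℕ} (H : ∀ i, Matrix (Fin q) (Fin (n i)) ℝ)
    (A : ∀ i, Matrix (Fin p) (Fin (n i)) ℝ) (b : Fin p → ℝ) (β : ℝ) (lam : Fin p → ℝ)
    (y : ∀ i, Fin (n i) → ℝ) (i : Fin m) : Fin (n i) → ℝ :=
  (H i)ᵀ *ᵥ blkMulVec H y - (A i)ᵀ *ᵥ (lam - β • (blkMulVec A y - b))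

lemma sum_augLagGrad_xhat_dotProduct {q p : ℕ} (H : ∀ i, Matrix (Fin q) (Fin (n i)) ℝ)
    (A : ∀ i, Matrix (Fin p) (Fin (n i)) ℝ) (b : Fin p → ℝ) (β : ℝ) (lam : Fin p → ℝ)
    (W : Matrix (Fin m) (Fin m) ℝ) (xk xk1 v : ∀ i, Fin (n i) → ℝ) :
    ∑ i, augLagGrad H A b β lam (xhat W xk xk1 i) i ⬝ᵥ v i
      = blkMulVec H xk1 ⬝ᵥ blkMulVec H v
        - ∑ i, ∑ j, W i j * ((H i *ᵥ v i) ⬝ᵥ (H j *ᵥ (xk1 j - xk j)))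
        - lam ⬝ᵥ blkMulVec A v
        + β * ((blkMulVec A xk1 - b) ⬝ᵥ blkMulVec A v
          - ∑ i, ∑ j, W i j * ((A i *ᵥ v i) ⬝ᵥ (A j *ᵥ (xk1 j - xk j)))) := by
  simp only [augLagGrad, mulVec_sub, mulVec_smul, sub_dotProduct, smul_dotProduct, smul_eq_mul,
    sum_sub_distrib, ← mul_sum, sum_transpose_mulVec_dotProduct,
    sum_transpose_mulVec_xhat_dotProduct]
  ring

end Blocks

lemma normPSq_sub_comm {m : ℕ} {n : Fin m → ℕ} (P : ∀ i, Matrix (Fin (n i)) (Fin (n i)) ℝ)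
    (x y : ∀ i, Fin (n i) → ℝ) : normPSq P (x - y) = normPSq P (y - x) := by
  simp only [normPSq, ← neg_sub y x, Pi.neg_apply, mulVec_neg, neg_dotProduct, dotProduct_neg,
    neg_neg]

theorem stmt_7_general {m q p : ℕ} {n : Fin m → ℕ}
    (H : ∀ i : Fin m, Matrix (Fin q) (Fin (n i)) ℝ)
    (A : ∀ i : Fin m, Matrix (Fin p) (Fin (n i)) ℝ)
    (b : Fin p → ℝ)
    (g : ∀ i : Fin m, (Fin (n i) → ℝ) → ℝ)
    (hg : ∀ i : Fin m, ConvexOn ℝ Set.univ (g i))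
    (P : ∀ i : Fin m, Matrix (Fin (n i)) (Fin (n i)) ℝ)
    (W : Matrix (Fin m) (Fin m) ℝ)
    (β ρ : ℝ)
    (xk xk1 : ∀ i : Fin m, Fin (n i) → ℝ) (lamk lamk1 : Fin p → ℝ)
    (hiter : Iter H A b g P W β ρ xk xk1 lamk lamk1)
    (x : ∀ i : Fin m, Fin (n i) → ℝ) (hfeas : blkMulVec A x = b) :
    ∑ i, ∑ j, W i j * ((H i *ᵥ (xk1 i - x i)) ⬝ᵥ (H j *ᵥ (xk1 j - xk j)))
      + β * ∑ i, ∑ j, W i j * ((A i *ᵥ (xk1 i - x i)) ⬝ᵥ (A j *ᵥ (xk1 j - xk j)))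
    ≥ (1 / 2) * ((blkMulVec H (xk1 - x)) ⬝ᵥ (blkMulVec H (xk1 - x)))
      + Fobj H g xk1 - Fobj H g x - lamk1 ⬝ᵥ (blkMulVec A xk1 - b)
      + (β - ρ) * ((blkMulVec A xk1 - b) ⬝ᵥ (blkMulVec A xk1 - b))
      + (1 / 2) * (normPSq P (xk1 - x) - normPSq P (xk - x)
          + normPSq P (xk1 - xk)) := by
  obtain ⟨hmin, rfl⟩ := hiter
  set d := fun i => augLagGrad H A b β lamk (xhat W xk xk1 i) i
  have hprox : ∀ i, d i ⬝ᵥ xk1 i + g i (xk1 i)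
      + (1 / 2) * ((xk1 i - xk i) ⬝ᵥ (P i *ᵥ (xk1 i - xk i)))
      + (1 / 2) * ((x i - xk1 i) ⬝ᵥ (P i *ᵥ (x i - xk1 i)))
      ≤ d i ⬝ᵥ x i + g i (x i) + (1 / 2) * ((x i - xk i) ⬝ᵥ (P i *ᵥ (x i - xk i))) := fun i =>
    prox_three_point (ψ := fun ξ => d i ⬝ᵥ ξ + g i ξ)
      (((dotProductBilin ℝ ℝ (d i)).convexOn convex_univ).add (hg i)) (P i) (hmin i) (x i)
  have hsum := sum_le_sum fun i (_ : i ∈ univ) => hprox i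
  simp only [sum_add_distrib, ← mul_sum] at hsum
  have hgrad := sum_augLagGrad_xhat_dotProduct H A b β lamk W xk xk1 (xk1 - x)
  simp only [Pi.sub_apply, dotProduct_sub, sum_sub_distrib] at hgrad
  rw [blkMulVec_sub A, hfeas] at hgrad
  have hpolar : blkMulVec H xk1 ⬝ᵥ blkMulVec H (xk1 - x)
      = (1 / 2) * (blkMulVec H (xk1 - x) ⬝ᵥ blkMulVec H (xk1 - x))
        + (1 / 2) * (blkMulVec H xk1 ⬝ᵥ blkMulVec H xk1)
        - (1 / 2) * (blkMulVec H x ⬝ᵥ blkMulVec H x) := by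
    simp only [blkMulVec_sub, dotProduct_sub, sub_dotProduct, dotProduct_comm (blkMulVec H x)]
    ring
  have hdual : (lamk - ρ • (blkMulVec A xk1 - b)) ⬝ᵥ (blkMulVec A xk1 - b)
      = lamk ⬝ᵥ (blkMulVec A xk1 - b)
        - ρ * ((blkMulVec A xk1 - b) ⬝ᵥ (blkMulVec A xk1 - b)) := by
    rw [sub_dotProduct, smul_dotProduct, smul_eq_mul]
  rw [normPSq_sub_comm P xk x, normPSq_sub_comm P xk1 x]
  simp only [Fobj, normPSq, Pi.sub_apply, ge_iff_le]
  linarith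

/-- Inequality (17): if the block updates of one iteration are performed, then
for any `x` with `Ax = b`,
`Σ_{i,j} w_{ij}⟨H_i(x_i^{k+1} − x_i), H_j(x_j^{k+1} − x_j^k)⟩
 + β Σ_{i,j} w_{ij}⟨A_i(x_i^{k+1} − x_i), A_j(x_j^{k+1} − x_j^k)⟩
 ≥ (1/2)‖H(x^{k+1} − x)‖² + F(x^{k+1}) − F(x) − ⟨λ^{k+1}, Ax^{k+1} − b⟩
   + (β − ρ)‖Ax^{k+1} − b‖²
   + (1/2)(‖x^{k+1} − x‖_P² − ‖x^k − x‖_P² + ‖x^{k+1} − x^k‖_P²)`. -/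
theorem stmt_7 {m q p : ℕ} {n : Fin m → ℕ}
    (H : ∀ i : Fin m, Matrix (Fin q) (Fin (n i)) ℝ)
    (A : ∀ i : Fin m, Matrix (Fin p) (Fin (n i)) ℝ)
    (b : Fin p → ℝ)
    (g : ∀ i : Fin m, (Fin (n i) → ℝ) → ℝ)
    (hg : ∀ i : Fin m, ConvexOn ℝ Set.univ (g i))
    (P : ∀ i : Fin m, Matrix (Fin (n i)) (Fin (n i)) ℝ)
    (hP : ∀ i : Fin m, (P i).PosSemidef)
    (W : Matrix (Fin m) (Fin m) ℝ)
    (β ρ : ℝ) (hβ : 0 < β) (hρ : 0 < ρ)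
    (xk xk1 : ∀ i : Fin m, Fin (n i) → ℝ) (lamk lamk1 : Fin p → ℝ)
    (hiter : Iter H A b g P W β ρ xk xk1 lamk lamk1)
    (x : ∀ i : Fin m, Fin (n i) → ℝ) (hfeas : blkMulVec A x = b) :
    ∑ i, ∑ j, W i j * ((H i *ᵥ (xk1 i - x i)) ⬝ᵥ (H j *ᵥ (xk1 j - xk j)))
      + β * ∑ i, ∑ j, W i j * ((A i *ᵥ (xk1 i - x i)) ⬝ᵥ (A j *ᵥ (xk1 j - xk j)))
    ≥ (1 / 2) * ((blkMulVec H (xk1 - x)) ⬝ᵥ (blkMulVec H (xk1 - x)))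
      + Fobj H g xk1 - Fobj H g x - lamk1 ⬝ᵥ (blkMulVec A xk1 - b)
      + (β - ρ) * ((blkMulVec A xk1 - b) ⬝ᵥ (blkMulVec A xk1 - b))
      + (1 / 2) * (normPSq P (xk1 - x) - normPSq P (xk - x)
          + normPSq P (xk1 - xk)) :=
  stmt_7_general H A b g hg P W β ρ xk xk1 lamk lamk1 hiter x hfeas
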